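/- arXiv:1312.3437 — 2 statements merged into one kernel-verified Lean document; each statement's English description precedes it below -/
import Mathlib

section
/- (Tits' solution to the word problem, part 1) A word in S* is reduced for the Coxeter system (W,S) (i.e. its free-monoid length equals the Coxeter length of the element it represents) if and only if its length cannot be decreased by any finite sequence of M-operations. -/
/-- The alternating word `[s, r, m] = srsr⋯` of length `m`, starting with `s`. -/
def altWord {S : Type*} (s r : S) : ℕ → List S
  | 0 => []
  | n + 1 => s :: altWord r s n

/-- An `M⁽¹⁾`-operation: delete a subword `ss`. -/
def NilMove {S : Type*} (w w' : List S) : Prop :=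
  ∃ (v u : List S) (s : S), w = v ++ [s, s] ++ u ∧ w' = v ++ u

/-- An `M⁽²⁾`-operation (braid move): replace a subword `[s, r, m_{s,r}]` by
`[r, s, m_{s,r}]`, when `m_{s,r} < ∞` (i.e. `M s r ≠ 0` in Mathlib's convention). -/
def BraidMove {S : Type*} (M : CoxeterMatrix S) (w w' : List S) : Prop :=
  ∃ (v u : List S) (s r : S), M s r ≠ 0 ∧
    w = v ++ altWord s r (M s r) ++ u ∧ w' = v ++ altWord r s (M s r) ++ u

/-- An `M`-operation is either an `M⁽¹⁾`- or an `M⁽²⁾`-operation. -/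
def MMove {S : Type*} (M : CoxeterMatrix S) (w w' : List S) : Prop :=
  NilMove w w' ∨ BraidMove M w w'

/-- A word is `M`-reduced if its length cannot be decreased by any finite sequence of
`M`-operations. -/
def MReduced {S : Type*} (M : CoxeterMatrix S) (w : List S) : Prop :=
  ∀ w' : List S, Relation.ReflTransGen (MMove M) w w' → w.length ≤ w'.length

/-! An `M`-operation does not change the element a word represents, so a reduced word cannot
be shortened. Conversely, if `i :: v` is not reduced while `v` is, then `i` is a left descent of
the element of `v`; by Matsumoto's theorem braid moves turn `v` into a reduced word `i :: v'`,
and deleting `i i` shortens the word.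

Matsumoto's theorem is proved by induction on the length: two reduced words of `w` starting
with different letters `i ≠ j` exhibit two left descents, and the exchange condition then yields
a reduced word of `w` starting with the braid word `[i, j, m_{ij}]`. This uses that `s i * s j`
has order exactly `m_{ij}`, read off from the geometric representation, where `s i * s j` acts
as a rotation by `2π / m_{ij}` on the span of `e_i, e_j`. The exchange condition comes from
Bourbaki's representation of `W` on `W × ZMod 2`, which shows that the parity of the number of
occurrences of a reflection in the left inversion sequence of a word only depends on the
element. -/

open List Relation

section altWord

variable {S : Type*}

@[simp] lemma altWord_zero (s r : S) : altWord s r 0 = [] := rfl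

@[simp] lemma altWord_succ (s r : S) (n : ℕ) : altWord s r (n + 1) = s :: altWord r s n := rfl

@[simp] lemma length_altWord (s r : S) (n : ℕ) : (altWord s r n).length = n := by
  induction n generalizing s r with
  | zero => rfl
  | succ n ih => simp [ih]

lemma altWord_add (s r : S) (p q : ℕ) :
    altWord s r (p + q) = altWord s r p ++ if Even p then altWord s r q else altWord r s q := by
  induction p generalizing s r with
  | zero => simp
  | succ p ih =>
    rw [Nat.add_right_comm, altWord_succ, altWord_succ, ih, cons_append]
    by_cases hp : Even p <;> simp [hp, Nat.even_add_one]

lemma take_altWord (s r : S) {j k : ℕ} (h : j ≤ k) :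
    (altWord s r k).take j = altWord s r j := by
  obtain ⟨d, rfl⟩ := Nat.exists_eq_add_of_le h
  rw [altWord_add, take_left' (length_altWord s r j)]

end altWord

section Moves

variable {B : Type*} {M : CoxeterMatrix B} {a b : List B}

lemma BraidMove.cons (h : BraidMove M a b) (i : B) : BraidMove M (i :: a) (i :: b) := by
  obtain ⟨v, u, j, k, hM, rfl, rfl⟩ := h
  exact ⟨i :: v, u, j, k, hM, rfl, rfl⟩

lemma BraidMove.mMove (h : BraidMove M a b) : MMove M a b :=
  .inr h

lemma MMove.cons (h : MMove M a b) (i : B) : MMove M (i :: a) (i :: b) := by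
  rcases h with ⟨v, u, j, rfl, rfl⟩ | h
  · exact .inl ⟨i :: v, u, j, rfl, rfl⟩
  · exact (h.cons i).mMove

end Moves

namespace CoxeterMatrix

open Finsupp Polynomial.Chebyshev Real

variable {B : Type*} (M : CoxeterMatrix B)

/-- `v ↦ B(e_a, v)` for the cosine form `B(e_a, e_b) = -cos (π / M a b)`. When `M a b = 0`
(`m_{ab} = ∞`), the junk value `π / 0 = 0` yields the intended `B(e_a, e_b) = -1`. -/
noncomputable def cosForm (a : B) : Module.Dual ℝ (B →₀ ℝ) :=
  linearCombination ℝ fun b => -cos (π / M a b)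

lemma cosForm_single (a b : B) : M.cosForm a (single b 1) = -cos (π / M a b) := by
  simp [cosForm]

lemma cosForm_single_self (a : B) : M.cosForm a (single a 1) = 1 := by
  simp [cosForm_single]

noncomputable def geomRefl (a : B) : (B →₀ ℝ) ≃ₗ[ℝ] (B →₀ ℝ) :=
  Module.reflection (x := single a 1) (f := 2 • M.cosForm a) (by simp [cosForm_single_self])

lemma geomRefl_apply (a : B) (v : B →₀ ℝ) :
    M.geomRefl a v = v - (2 * M.cosForm a v) • single a 1 := by
  simp [geomRefl, Module.reflection_apply]

lemma geomRefl_single (a b : B) :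
    M.geomRefl a (single b 1) = single b 1 + (2 * cos (π / M a b)) • single a 1 := by
  rw [geomRefl_apply, cosForm_single]
  module

lemma geomRefl_inv (a : B) : (M.geomRefl a)⁻¹ = M.geomRefl a :=
  Module.reflection_inv _

lemma geomRefl_mul_geomRefl_pow_single (a b : B) (n : ℕ) :
    ((M.geomRefl a * M.geomRefl b) ^ n) (single a 1) =
      (U ℝ (2 * n)).eval (cos (π / M a b)) • single a 1 +
        (U ℝ (2 * n - 1)).eval (cos (π / M a b)) • single b 1 := by
  set c := cos (π / M a b)
  have hab : (M.geomRefl a * M.geomRefl b) (single a 1) =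
      (4 * c ^ 2 - 1) • single a 1 + (2 * c) • single b 1 := by
    simp only [LinearEquiv.mul_apply, geomRefl_single, map_add, map_smul, M.symmetric b a,
      M.diagonal, Nat.cast_one, div_one, cos_pi]
    module
  have hbb : (M.geomRefl a * M.geomRefl b) (single b 1) =
      (-(2 * c)) • single a 1 + (-1 : ℝ) • single b 1 := by
    simp only [LinearEquiv.mul_apply, geomRefl_single, map_add, map_smul, M.diagonal,
      Nat.cast_one, div_one, cos_pi]
    module
  have hU (k : ℤ) :
      (U ℝ (k + 2)).eval c = 2 * c * (U ℝ (k + 1)).eval c - (U ℝ k).eval c := by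
    simp [U_add_two]
  induction n with
  | zero => simp
  | succ n ih =>
    rw [pow_succ', LinearEquiv.mul_apply, ih, map_add, map_smul, map_smul, hab, hbb]
    have h₁ := hU (2 * n - 1)
    have h₂ := hU (2 * n)
    push_cast
    ring_nf at h₁ h₂ ⊢
    match_scalars
    · linear_combination (norm := ring_nf) -h₂ - 2 * c * h₁
    · linear_combination (norm := ring_nf) -h₁

lemma sin_pi_div_pos {a b : B} (hab : a ≠ b) (h0 : M a b ≠ 0) : 0 < sin (π / M a b) := by
  have h2 : (2 : ℝ) ≤ M a b := by
    have := M.off_diagonal a b hab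
    exact_mod_cast (by omega : 2 ≤ M a b)
  exact sin_pos_of_pos_of_lt_pi (by positivity) (div_lt_self pi_pos (by linarith))

lemma dvd_of_geomRefl_mul_geomRefl_pow_eq_one {a b : B} (hab : a ≠ b) {n : ℕ}
    (h : (M.geomRefl a * M.geomRefl b) ^ n = 1) : M a b ∣ n := by
  have hv := M.geomRefl_mul_geomRefl_pow_single a b n
  rw [h, LinearEquiv.coe_one, id] at hv
  have h₁ : (U ℝ (2 * n)).eval (cos (π / M a b)) = 1 := by
    simpa [hab] using (congrArg (· a) hv).symm
  have h₂ : (U ℝ (2 * n - 1)).eval (cos (π / M a b)) = 0 := by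
    simpa [hab] using (congrArg (· b) hv).symm
  rcases eq_or_ne (M a b) 0 with h0 | h0
  · rw [h0, Nat.cast_zero, div_zero, cos_zero, U_eval_one] at h₂
    push_cast at h₂
    rw [h0, Nat.zero_dvd]
    exact_mod_cast (by linarith : (n : ℝ) = 0)
  · set θ := π / M a b with hθ
    have hsin : sin (2 * n * θ) = 0 := by
      have := U_real_cos θ (2 * n - 1)
      rw [h₂, zero_mul] at this
      convert this.symm using 2
      push_cast
      ring
    have hsin' : sin (2 * n * θ + θ) = sin θ := by
      have := U_real_cos θ (2 * n)
      rw [h₁, one_mul] at this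
      convert this.symm using 2
      push_cast
      ring
    have hcos : cos (2 * n * θ) = 1 := by
      rw [sin_add, hsin, zero_mul, zero_add] at hsin'
      exact (mul_eq_right₀ (M.sin_pi_div_pos hab h0).ne').1 hsin'
    obtain ⟨N, hN⟩ := (cos_eq_one_iff _).1 hcos
    have hm : (M a b : ℝ) ≠ 0 := by exact_mod_cast h0
    have hn : ((n : ℤ) : ℝ) = ((M a b * N : ℤ) : ℝ) := by
      rw [hθ] at hN
      field_simp at hN
      push_cast
      linarith
    exact Int.natCast_dvd_natCast.1 ⟨N, by exact_mod_cast hn⟩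

lemma geomRefl_mul_geomRefl_pow_single_self {a b : B} (hab : a ≠ b) (h0 : M a b ≠ 0) :
    ((M.geomRefl a * M.geomRefl b) ^ M a b) (single a 1) = single a 1 := by
  set θ := π / M a b with hθ
  have hs := M.sin_pi_div_pos hab h0
  have hmθ : (M a b : ℝ) * θ = π := by
    rw [hθ]
    field_simp
  have h₁ : (U ℝ (2 * (M a b : ℕ))).eval (cos θ) = 1 := by
    refine (mul_eq_right₀ hs.ne').1 ?_
    rw [U_real_cos]
    convert sin_add_two_pi θ using 2
    push_cast
    linear_combination 2 * hmθ
  have h₂ : (U ℝ (2 * (M a b : ℕ) - 1)).eval (cos θ) = 0 := by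
    refine (mul_eq_zero_iff_right hs.ne').1 ?_
    rw [U_real_cos]
    convert sin_two_pi using 2
    push_cast
    linear_combination 2 * hmθ
  rw [geomRefl_mul_geomRefl_pow_single, h₁, h₂]
  simp

lemma geomRefl_mul_geomRefl_pow_single_right {a b : B} (hab : a ≠ b) (h0 : M a b ≠ 0) :
    ((M.geomRefl a * M.geomRefl b) ^ M a b) (single b 1) = single b 1 := by
  have h := M.geomRefl_mul_geomRefl_pow_single_self hab.symm (by rwa [M.symmetric])
  rw [M.symmetric, ← geomRefl_inv, ← geomRefl_inv M a, ← mul_inv_rev, inv_pow,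
    LinearEquiv.coe_inv] at h
  exact (LinearEquiv.eq_symm_apply _).1 h.symm

lemma exists_orthogonal_decomposition {a b : B} (hab : a ≠ b) (h0 : M a b ≠ 0)
    (v : B →₀ ℝ) :
    ∃ (x y : ℝ) (u : B →₀ ℝ), M.cosForm a u = 0 ∧ M.cosForm b u = 0 ∧
      v = x • single a 1 + y • single b 1 + u := by
  set c := cos (π / M a b)
  have hc : 1 - c ^ 2 ≠ 0 := by
    rw [← sin_sq]
    exact pow_ne_zero 2 (M.sin_pi_div_pos hab h0).ne'
  set x := (M.cosForm a v + c * M.cosForm b v) / (1 - c ^ 2)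
  set y := (M.cosForm b v + c * M.cosForm a v) / (1 - c ^ 2)
  refine ⟨x, y, v - x • single a 1 - y • single b 1, ?_, ?_, by abel⟩
  · simp only [x, y, map_sub, map_smul, cosForm_single_self, smul_eq_mul]
    simp only [cosForm_single]
    field_simp
    ring
  · simp only [x, y, map_sub, map_smul, cosForm_single_self, smul_eq_mul]
    simp only [cosForm_single, M.symmetric b a]
    field_simp
    ring

lemma isLiftable_geomRefl : M.IsLiftable M.geomRefl := by
  intro a b
  rcases eq_or_ne a b with rfl | hab
  · rw [M.diagonal, pow_one, ← inv_mul_cancel (M.geomRefl a), geomRefl_inv]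
  rcases eq_or_ne (M a b) 0 with h0 | h0
  · rw [h0, pow_zero]
  refine LinearEquiv.ext fun v => ?_
  obtain ⟨x, y, u, hua, hub, rfl⟩ := M.exists_orthogonal_decomposition hab h0 v
  have hu : ((M.geomRefl a * M.geomRefl b) ^ M a b) u = u := by
    refine (LinearEquiv.pow_apply _ _ _).trans (Function.iterate_fixed ?_ _)
    simp [geomRefl_apply, hua, hub]
  rw [map_add, map_add, map_smul, map_smul, M.geomRefl_mul_geomRefl_pow_single_self hab h0,
    M.geomRefl_mul_geomRefl_pow_single_right hab h0, hu, LinearEquiv.coe_one, id]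

end CoxeterMatrix

namespace CoxeterSystem

variable {B W : Type*} [Group W] {M : CoxeterMatrix B} (cs : CoxeterSystem M W)

local prefix:100 "s" => cs.simple
local prefix:100 "π" => cs.wordProd
local prefix:100 "ℓ" => cs.length
local prefix:100 "lis" => cs.leftInvSeq

lemma wordProd_altWord_mul_inv (i j : B) (n : ℕ) :
    π (altWord i j n) * (π (altWord j i n))⁻¹ = (s i * s j) ^ n := by
  induction n generalizing i j with
  | zero => simp
  | succ n ih =>
    rw [altWord_succ, altWord_succ, wordProd_cons, wordProd_cons, mul_inv_rev, inv_simple,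
      mul_assoc, ← mul_assoc (π _), ih, ← mul_assoc, ← mul_pow_mul, pow_succ, mul_assoc]

lemma wordProd_altWord_eq_iff (i j : B) (n : ℕ) :
    π (altWord i j n) = π (altWord j i n) ↔ (s i * s j) ^ n = 1 := by
  rw [← mul_inv_eq_one, wordProd_altWord_mul_inv]

lemma wordProd_altWord_braid (i j : B) : π (altWord i j (M i j)) = π (altWord j i (M i j)) :=
  (cs.wordProd_altWord_eq_iff i j _).2 (cs.simple_mul_simple_pow i j)

lemma _root_.BraidMove.wordProd_eq {a b : List B} (h : BraidMove M a b) : π a = π b := by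
  obtain ⟨v, u, i, j, -, rfl, rfl⟩ := h
  rw [wordProd_append, wordProd_append, cs.wordProd_altWord_braid, ← wordProd_append,
    ← wordProd_append]

lemma _root_.MMove.wordProd_eq {a b : List B} (h : MMove M a b) : π a = π b := by
  rcases h with ⟨v, u, i, rfl, rfl⟩ | h
  · simp [wordProd_append, wordProd_cons, simple_mul_simple_cancel_left]
  · exact h.wordProd_eq cs

lemma _root_.Relation.ReflTransGen.wordProd_eq {a b : List B} (h : ReflTransGen (MMove M) a b) :
    π a = π b := by
  induction h with
  | refl => rfl
  | tail _ hbc ih => rw [ih, hbc.wordProd_eq cs]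

lemma IsReduced.length_eq {ω ω' : List B} (hω : cs.IsReduced ω) (hω' : cs.IsReduced ω')
    (h : π ω = π ω') : ω.length = ω'.length := by
  rw [← hω.eq, ← hω'.eq, h]

lemma IsReduced.of_wordProd_eq {ω ω' : List B} (hω : cs.IsReduced ω) (h : π ω = π ω')
    (hlen : ω.length = ω'.length) : cs.IsReduced ω' := by
  rw [IsReduced, ← h, hω.eq, hlen]

lemma _root_.BraidMove.isReduced {a b : List B} (h : BraidMove M a b) (ha : cs.IsReduced a) :
    cs.IsReduced b := by
  refine ha.of_wordProd_eq cs (h.wordProd_eq cs) ?_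
  obtain ⟨v, u, i, j, -, rfl, rfl⟩ := h
  simp

lemma orderOf_simple_mul_simple (i j : B) : orderOf (s i * s j) = M i j := by
  refine Nat.dvd_antisymm (orderOf_dvd_of_pow_eq_one (cs.simple_mul_simple_pow i j)) ?_
  rcases eq_or_ne i j with rfl | hij
  · simp
  · apply M.dvd_of_geomRefl_mul_geomRefl_pow_eq_one hij
    have h := congrArg (cs.lift ⟨M.geomRefl, M.isLiftable_geomRefl⟩)
      (pow_orderOf_eq_one (s i * s j))
    rwa [map_pow, map_mul, lift_apply_simple, lift_apply_simple, map_one] at h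

section SignPerm

variable [DecidableEq W]

def simpleSignPerm (i : B) : Equiv.Perm (W × ZMod 2) :=
  Function.Involutive.toPerm (fun p => (s i * p.1 * s i, p.2 + if p.1 = s i then 1 else 0)) <| by
    rintro ⟨t, ε⟩
    by_cases ht : t = s i
    · subst ht
      simp [add_assoc, ← two_mul, show (2 : ZMod 2) = 0 from rfl]
    · simp [ht, mul_assoc, mul_eq_one_iff_eq_inv]

lemma simpleSignPerm_apply (i : B) (t : W) (ε : ZMod 2) :
    cs.simpleSignPerm i (t, ε) = (s i * t * s i, ε + if t = s i then 1 else 0) := rfl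

def wordSignPerm (ω : List B) : Equiv.Perm (W × ZMod 2) := (ω.reverse.map cs.simpleSignPerm).prod

lemma wordSignPerm_apply (ω : List B) (t : W) (ε : ZMod 2) :
    cs.wordSignPerm ω (t, ε) = ((π ω)⁻¹ * t * π ω, ε + (lis ω).count t) := by
  induction ω generalizing t ε with
  | nil => simp [wordSignPerm]
  | cons i ω ih =>
    have hcount : ((lis ω).map (MulAut.conj (s i))).count t = (lis ω).count (s i * t * s i) := by
      rw [← count_map_of_injective _ _ (MulAut.conj (s i)).injective (s i * t * s i)]
      simp [mul_assoc]
    simp only [wordSignPerm, reverse_cons, map_append, prod_append, map_singleton, prod_singleton,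
      Equiv.Perm.mul_apply, simpleSignPerm_apply] at ih ⊢
    rw [ih, leftInvSeq, count_cons, hcount, wordProd_cons, mul_inv_rev, inv_simple]
    refine Prod.ext (by simp [mul_assoc]) ?_
    by_cases ht : t = s i <;> simp [ht, Ne.symm, add_comm, add_left_comm]

lemma wordSignPerm_alternatingWord (i j : B) (k : ℕ) :
    cs.wordSignPerm (alternatingWord j i (2 * k)) =
      (cs.simpleSignPerm i * cs.simpleSignPerm j) ^ k := by
  induction k with
  | zero => simp [wordSignPerm, alternatingWord]
  | succ k ih =>
    rw [mul_add_one, alternatingWord_succ, alternatingWord_succ, pow_succ', ← ih]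
    simp [wordSignPerm, mul_assoc]

lemma even_count_leftInvSeq_alternatingWord (i j : B) (t : W) :
    Even ((lis (alternatingWord j i (2 * M i j))).count t) := by
  set f : ℕ → W := fun k => s j * (s i * s j) ^ k
  have hlis : lis (alternatingWord j i (2 * M i j)) = (range (M i j + M i j)).map f := by
    refine ext_getElem (by simp [two_mul]) fun k h _ => ?_
    rw [cs.getElem_leftInvSeq_alternatingWord j i _ k (by simpa using h),
      prod_alternatingWord_eq_mul_pow]
    simp [f, Nat.not_even_bit1, show (2 * k + 1) / 2 = k by omega]
  have hper : (range (M i j)).map (f ∘ (M i j + ·)) = (range (M i j)).map f :=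
    map_congr_left fun k _ => by simp [f, pow_add, simple_mul_simple_pow]
  rw [hlis, range_add, map_append, List.map_map, hper, count_append]
  exact ⟨_, rfl⟩

lemma isLiftable_simpleSignPerm : M.IsLiftable cs.simpleSignPerm := by
  intro i j
  rw [← wordSignPerm_alternatingWord]
  refine Equiv.ext fun ⟨t, ε⟩ => ?_
  have hπ : π (alternatingWord j i (2 * M i j)) = 1 := by
    simp [prod_alternatingWord_eq_mul_pow, M.symmetric i j, simple_mul_simple_pow]
  have hcount := ZMod.natCast_eq_zero_iff_even.2 (cs.even_count_leftInvSeq_alternatingWord i j t)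
  simp [wordSignPerm_apply, hπ, hcount]

def signPerm : W →* Equiv.Perm (W × ZMod 2) :=
  cs.lift ⟨cs.simpleSignPerm, cs.isLiftable_simpleSignPerm⟩

lemma signPerm_wordProd_inv (ω : List B) : cs.signPerm (π ω)⁻¹ = cs.wordSignPerm ω := by
  rw [← wordProd_reverse, wordProd, map_list_prod, List.map_map, wordSignPerm]
  exact congrArg (fun f => (ω.reverse.map f).prod) (funext (cs.lift_apply_simple _))

lemma count_leftInvSeq_eq_of_wordProd_eq {ω ω' : List B} (h : π ω = π ω') (t : W) :
    ((lis ω).count t : ZMod 2) = (lis ω').count t := by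
  have := congrArg (fun p => (p (t, 0)).2)
    ((cs.signPerm_wordProd_inv ω).symm.trans (h ▸ cs.signPerm_wordProd_inv ω'))
  simpa [wordSignPerm_apply] using this

end SignPerm

lemma exists_isReduced_cons_of_isLeftDescent {w : W} {i : B} (hi : cs.IsLeftDescent w i) :
    ∃ ω, cs.IsReduced (i :: ω) ∧ π (i :: ω) = w := by
  obtain ⟨ω, hω, h⟩ := cs.exists_isReduced (s i * w)
  have hπ : π (i :: ω) = w := by rw [wordProd_cons, ← h, simple_mul_simple_cancel_left]
  refine ⟨ω, ?_, hπ⟩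
  rw [IsReduced, hπ, length_cons, ← hω.eq, ← h, (cs.isLeftDescent_iff).1 hi]

lemma IsReduced.of_cons {ω : List B} {i : B} (h : cs.IsReduced (i :: ω)) : cs.IsReduced ω := by
  simpa using h.drop 1

lemma IsReduced.isLeftDescent_cons {ω : List B} {i : B} (h : cs.IsReduced (i :: ω)) :
    cs.IsLeftDescent (π (i :: ω)) i := by
  rw [IsLeftDescent, h.eq, wordProd_cons, simple_mul_simple_cancel_left, (h.of_cons cs).eq,
    length_cons]
  exact Nat.lt_succ_self _

lemma simple_mem_leftInvSeq_of_isLeftDescent {ω : List B} {i : B}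
    (hi : cs.IsLeftDescent (π ω) i) : s i ∈ lis ω := by
  classical
  obtain ⟨ω', hω', h⟩ := cs.exists_isReduced_cons_of_isLeftDescent hi
  have hcount := cs.count_leftInvSeq_eq_of_wordProd_eq h (s i)
  rw [count_eq_one_of_mem hω'.nodup_leftInvSeq mem_cons_self] at hcount
  refine count_pos_iff.1 (Nat.pos_of_ne_zero fun h0 => ?_)
  rw [h0, Nat.cast_zero] at hcount
  exact one_ne_zero hcount

/-- The exchange condition. -/
lemma exists_simple_mul_wordProd_take {ω : List B} {i : B} (hi : cs.IsLeftDescent (π ω) i) :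
    ∃ j < ω.length, s i * π (ω.take j) = π (ω.take (j + 1)) := by
  obtain ⟨j, hj, hji⟩ := getElem_of_mem (cs.simple_mem_leftInvSeq_of_isLeftDescent hi)
  rw [length_leftInvSeq] at hj
  refine ⟨j, hj, ?_⟩
  rw [getElem_leftInvSeq _ _ _ hj] at hji
  rw [← take_concat_get' ω j hj, wordProd_append, wordProd_singleton, ← hji]
  group

lemma wordProd_eraseIdx_of_simple_mul_wordProd_take {ω : List B} {i : B} {j : ℕ}
    (h : s i * π (ω.take j) = π (ω.take (j + 1))) : π (ω.eraseIdx j) = s i * π ω := by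
  conv_rhs => rw [← take_append_drop (j + 1) ω, wordProd_append, ← h]
  rw [eraseIdx_eq_take_drop_succ, wordProd_append, ← mul_assoc, simple_mul_simple_cancel_left]

lemma isLeftDescent_or_exists_isReduced_cons_append {u v : List B} {i : B}
    (h : cs.IsReduced (u ++ v)) (hi : cs.IsLeftDescent (π (u ++ v)) i) :
    cs.IsLeftDescent (π u) i ∨
      ∃ v', cs.IsReduced (i :: (u ++ v')) ∧ π (i :: (u ++ v')) = π (u ++ v) := by
  obtain ⟨j, hj, hji⟩ := cs.exists_simple_mul_wordProd_take hi
  by_cases hju : j < u.length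
  · left
    rw [take_append_of_le_length hju.le, take_append_of_le_length hju] at hji
    have hu : cs.IsReduced u := by simpa using h.take u.length
    calc ℓ (s i * π u) = ℓ (π (u.eraseIdx j)) := by
          rw [cs.wordProd_eraseIdx_of_simple_mul_wordProd_take hji]
      _ ≤ (u.eraseIdx j).length := cs.length_wordProd_le _
      _ < ℓ (π u) := by rw [length_eraseIdx_of_lt hju, hu.eq]; omega
  · right
    have hπ : π (i :: (u ++ v.eraseIdx (j - u.length))) = π (u ++ v) := by
      rw [← eraseIdx_append_of_length_le (not_lt.1 hju), wordProd_cons,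
        cs.wordProd_eraseIdx_of_simple_mul_wordProd_take hji, simple_mul_simple_cancel_left]
    refine ⟨_, h.of_wordProd_eq cs hπ.symm ?_, hπ⟩
    simp only [length_cons, length_append] at hj ⊢
    rw [length_eraseIdx_of_lt (by omega)]
    omega

lemma ne_zero_and_le_of_isLeftDescent_altWord {i j : B} {k : ℕ}
    (h : cs.IsLeftDescent (π (altWord i j k)) j) : M i j ≠ 0 ∧ M i j ≤ k := by
  obtain ⟨p, hp, hpj⟩ := cs.exists_simple_mul_wordProd_take h
  rw [length_altWord] at hp
  rw [take_altWord _ _ hp.le, take_altWord _ _ hp, ← wordProd_cons, ← altWord_succ,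
    wordProd_altWord_eq_iff, ← orderOf_dvd_iff_pow_eq_one, orderOf_simple_mul_simple,
    M.symmetric] at hpj
  exact ⟨fun h0 => by simp [h0] at hpj, (Nat.le_of_dvd p.succ_pos hpj).trans hp⟩

theorem exists_isReduced_altWord_append {i j : B} (hij : i ≠ j) {k : ℕ} {v : List B}
    (hω : cs.IsReduced (altWord i j k ++ v)) (hi : cs.IsLeftDescent (π (altWord i j k ++ v)) i)
    (hj : cs.IsLeftDescent (π (altWord i j k ++ v)) j) :
    M i j ≠ 0 ∧ ∃ v', cs.IsReduced (altWord i j (M i j) ++ v') ∧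
      π (altWord i j (M i j) ++ v') = π (altWord i j k ++ v) := by
  -- Exchanging `j` either happens inside the alternating prefix, which forces
  -- `(s i * s j) ^ (p + 1) = 1` for some `p < k`, or lengthens the alternating prefix.
  rcases cs.isLeftDescent_or_exists_isReduced_cons_append hω hj with hju | ⟨v', hω', hπ⟩
  · obtain ⟨h0, hle⟩ := cs.ne_zero_and_le_of_isLeftDescent_altWord hju
    obtain ⟨d, rfl⟩ := Nat.exists_eq_add_of_le hle
    rw [altWord_add, append_assoc] at hω ⊢
    exact ⟨h0, _, hω, rfl⟩
  · -- for the termination of the recursive call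
    have hlen : v'.length < v.length := by
      have := hω'.length_eq cs hω hπ
      simp only [length_cons, length_append] at this
      omega
    obtain ⟨h0, v'', hω'', hπ''⟩ :=
      exists_isReduced_altWord_append hij.symm (k := k + 1) hω' (hπ ▸ hj) (hπ ▸ hi)
    have hb : BraidMove M (altWord j i (M j i) ++ v'') (altWord i j (M i j) ++ v'') :=
      ⟨[], v'', j, i, h0, rfl, by rw [M.symmetric]; rfl⟩
    exact ⟨by rwa [M.symmetric], v'', hb.isReduced cs hω'',
      (hb.wordProd_eq cs).symm.trans (hπ''.trans hπ)⟩
termination_by v.length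

/-- Matsumoto's theorem. -/
theorem reflTransGen_braidMove_of_isReduced {ω ω' : List B} (hω : cs.IsReduced ω)
    (hω' : cs.IsReduced ω') (h : π ω = π ω') : ReflTransGen (BraidMove M) ω ω' := by
  match ω, ω' with
  | [], [] => exact .refl
  | [], _ :: _ | _ :: _, [] => exact absurd (hω.length_eq cs hω' h) (by simp)
  | i :: v, j :: v' =>
    by_cases hij : i = j
    · subst hij
      have hv : π v = π v' := by simpa [wordProd_cons] using h
      exact (reflTransGen_braidMove_of_isReduced hω.of_cons hω'.of_cons hv).lift (i :: ·)
        fun _ _ hb => hb.cons i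
    obtain ⟨h0, u, hu, hπu⟩ := cs.exists_isReduced_altWord_append hij (k := 0) hω
      hω.isLeftDescent_cons (h ▸ hω'.isLeftDescent_cons)
    obtain ⟨m, hm⟩ := Nat.exists_eq_succ_of_ne_zero h0
    rw [hm] at hu hπu
    have hb : BraidMove M (i :: (altWord j i m ++ u)) (j :: (altWord i j m ++ u)) :=
      ⟨[], u, i, j, h0, by rw [hm]; rfl, by rw [hm]; rfl⟩
    have hu' : cs.IsReduced (j :: (altWord i j m ++ u)) := hb.isReduced cs hu
    -- for the termination of the second recursive call
    have hlen : m + u.length = v.length := by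
      simpa [add_right_comm] using hu.length_eq cs hω hπu
    have h₁ : π v = π (altWord j i m ++ u) := by
      simpa [wordProd_cons] using hπu.symm
    have h₂ : π (altWord i j m ++ u) = π v' := by
      simpa [wordProd_cons] using ((hb.wordProd_eq cs).symm.trans hπu).trans h
    have c₁ := (reflTransGen_braidMove_of_isReduced hω.of_cons (hu.of_cons cs) h₁).lift
      (i :: ·) fun _ _ hb => hb.cons i
    have c₂ := (reflTransGen_braidMove_of_isReduced (hu'.of_cons cs) hω'.of_cons h₂).lift
      (j :: ·) fun _ _ hb => hb.cons j
    exact c₁.trans (c₂.head hb)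
termination_by ω.length

theorem exists_reflTransGen_mMove_length_lt {ω : List B} (h : ¬cs.IsReduced ω) :
    ∃ ω', ReflTransGen (MMove M) ω ω' ∧ ω'.length < ω.length := by
  induction ω with
  | nil => exact absurd (by simp [IsReduced]) h
  | cons i v ih =>
    by_cases hv : cs.IsReduced v
    · have hi : cs.IsLeftDescent (π v) i := by
        refine cs.isLeftDescent_iff.2 ((cs.length_simple_mul (π v) i).resolve_left fun h' => h ?_)
        rw [IsReduced, wordProd_cons, h', hv.eq, length_cons]
      obtain ⟨v', hv', hπ⟩ := cs.exists_isReduced_cons_of_isLeftDescent hi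
      have hbraid := (cs.reflTransGen_braidMove_of_isReduced hv hv' hπ.symm).lift (i :: ·)
        fun _ _ hb => (hb.cons i).mMove
      refine ⟨v', hbraid.tail (.inl ⟨[], v', i, rfl, rfl⟩), ?_⟩
      have := hv.length_eq cs hv' hπ.symm
      simp only [length_cons] at this ⊢
      omega
    · obtain ⟨v', hvv', hlt⟩ := ih hv
      exact ⟨i :: v', hvv'.lift (i :: ·) fun _ _ hm => hm.cons i, by simpa using hlt⟩

end CoxeterSystem

/-- Tits' solution to the word problem, part 1: a word in `S*` is reduced
for `(W,S)` if and only if it is `M`-reduced. -/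
theorem isReduced_iff_mReduced {B : Type*} {W : Type*} [Group W]
    (M : CoxeterMatrix B) (cs : CoxeterSystem M W) (w : List B) :
    cs.IsReduced w ↔ MReduced M w := by
  refine ⟨fun hw w' hww' => ?_, fun hw => by_contra fun hnr => ?_⟩
  · calc w.length = cs.length (cs.wordProd w) := hw.symm
      _ = cs.length (cs.wordProd w') := by rw [hww'.wordProd_eq cs]
      _ ≤ w'.length := cs.length_wordProd_le w'
  · obtain ⟨w', hww', hlt⟩ := cs.exists_reflTransGen_mMove_length_lt hnr
    exact (hw w' hww').not_gt hlt
end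

section
/- If (M,X,Y,σ) is a mutable tuple, then (μ(M,X,Y,σ), X, Y, σ⁻¹) is also a mutable tuple and μ(μ(M,X,Y,σ), X, Y, σ⁻¹) = M; i.e. mutation is an involution on mutable tuples. -/
/-- A mutable tuple: `M` is a Coxeter matrix over `S`, `S = X ⊔ Y ⊔ T ⊔ Z` is a
partition, and `σ` is a permutation of `S` supported on `X` which is a
Coxeter-automorphism of the subsystem `(W_X, X)`, such that (i) `m_{t,y} = ∞` for
`t ∈ T`, `y ∈ Y`; (ii) `m_{z,y} < ∞` for `z ∈ Z`, `y ∈ Y`; (iii) `m_{z,σx} = m_{z,x}`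
for `z ∈ Z`, `x ∈ X`. (The entry `0` plays the role of `∞`.) -/
def IsMutable {S : Type*} (M : CoxeterMatrix S) (X Y T Z : Set S) (σ : Equiv.Perm S) :
    Prop :=
  Disjoint X Y ∧ Disjoint X T ∧ Disjoint X Z ∧ Disjoint Y T ∧ Disjoint Y Z ∧
    Disjoint T Z ∧ X ∪ Y ∪ T ∪ Z = Set.univ ∧
  (∀ x ∈ X, σ x ∈ X) ∧ (∀ s ∉ X, σ s = s) ∧
  (∀ x ∈ X, ∀ x' ∈ X, M (σ x) (σ x') = M x x') ∧
  (∀ t ∈ T, ∀ y ∈ Y, M t y = 0) ∧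
  (∀ z ∈ Z, ∀ y ∈ Y, M z y ≠ 0) ∧
  (∀ z ∈ Z, ∀ x ∈ X, M z (σ x) = M z x)

open scoped Classical in
/-- The entries of the mutation `μ(M,X,Y,σ)` of a Coxeter matrix `M`:
`n_{r,s} = m_{σ(r),σ(s)}` if `r,s ∈ X`; `n_{r,s} = m_{σ(r),s}` if `r ∈ X`, `s ∈ Y`
(extended symmetrically); and `n_{r,s} = m_{r,s}` otherwise. -/
noncomputable def mutEntry {S : Type*} (M : CoxeterMatrix S) (X Y : Set S)
    (σ : Equiv.Perm S) (r s : S) : ℕ :=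
  if r ∈ X ∧ s ∈ X then M (σ r) (σ s)
  else if r ∈ X ∧ s ∈ Y then M (σ r) s
  else if r ∈ Y ∧ s ∈ X then M r (σ s)
  else M r s

/-! Mutation relabels the entries in the rows and columns of `X` through `σ`, and `σ⁻¹` undoes
this relabelling. The rows indexed by `T` and `Z` are left unchanged, so conditions (i) and (ii)
persist, and condition (iii) for `σ⁻¹` is condition (iii) for `σ` read at `σ⁻¹ x`. -/

theorem Equiv.Perm.apply_inv_self {S : Type*} (σ : Equiv.Perm S) (x : S) : σ (σ⁻¹ x) = x :=
  σ.apply_symm_apply x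

theorem Equiv.Perm.inv_apply_mem_of_eq_self_of_notMem {S : Type*} {σ : Equiv.Perm S} {X : Set S}
    (hfix : ∀ s ∉ X, σ s = s) {x : S} (hx : x ∈ X) : σ⁻¹ x ∈ X := by
  by_contra h
  have hσ := hfix _ h
  rw [σ.apply_inv_self] at hσ
  exact h (hσ ▸ hx)

section MutEntry

variable {S : Type*} (M : CoxeterMatrix S) {X Y : Set S} (σ : Equiv.Perm S) {r s : S}

theorem mutEntry_of_mem_of_mem (hr : r ∈ X) (hs : s ∈ X) :
    mutEntry M X Y σ r s = M (σ r) (σ s) := by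
  rw [mutEntry, if_pos ⟨hr, hs⟩]

theorem mutEntry_of_mem_X_of_mem_Y (hr : r ∈ X) (hsX : s ∉ X) (hs : s ∈ Y) :
    mutEntry M X Y σ r s = M (σ r) s := by
  rw [mutEntry, if_neg fun h => hsX h.2, if_pos ⟨hr, hs⟩]

theorem mutEntry_of_mem_Y_of_mem_X (hrX : r ∉ X) (hr : r ∈ Y) (hs : s ∈ X) :
    mutEntry M X Y σ r s = M r (σ s) := by
  rw [mutEntry, if_neg fun h => hrX h.1, if_neg fun h => hrX h.1, if_pos ⟨hr, hs⟩]

theorem mutEntry_of_notMem_of_notMem (hr : r ∉ X) (hs : s ∉ X) :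
    mutEntry M X Y σ r s = M r s := by
  rw [mutEntry, if_neg fun h => hr h.1, if_neg fun h => hr h.1, if_neg fun h => hs h.2]

theorem mutEntry_of_notMem_left (hrX : r ∉ X) (hrY : r ∉ Y) :
    mutEntry M X Y σ r s = M r s := by
  rw [mutEntry, if_neg fun h => hrX h.1, if_neg fun h => hrX h.1, if_neg fun h => hrY h.1]

theorem mutEntry_of_notMem_right (hsX : s ∉ X) (hsY : s ∉ Y) :
    mutEntry M X Y σ r s = M r s := by
  rw [mutEntry, if_neg fun h => hsX h.2, if_neg fun h => hsY h.2, if_neg fun h => hsX h.2]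

theorem mutEntry_mutEntry_inv (hσ : ∀ x ∈ X, σ⁻¹ x ∈ X) {N : CoxeterMatrix S}
    (hN : ∀ r s, N r s = mutEntry M X Y σ r s) (r s : S) :
    mutEntry N X Y σ⁻¹ r s = M r s := by
  by_cases hr : r ∈ X <;> by_cases hs : s ∈ X
  · rw [mutEntry_of_mem_of_mem N _ hr hs, hN,
      mutEntry_of_mem_of_mem M _ (hσ r hr) (hσ s hs), σ.apply_inv_self, σ.apply_inv_self]
  · by_cases hsY : s ∈ Y
    · rw [mutEntry_of_mem_X_of_mem_Y N _ hr hs hsY, hN,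
        mutEntry_of_mem_X_of_mem_Y M _ (hσ r hr) hs hsY, σ.apply_inv_self]
    · rw [mutEntry_of_notMem_right N _ hs hsY, hN, mutEntry_of_notMem_right M _ hs hsY]
  · by_cases hrY : r ∈ Y
    · rw [mutEntry_of_mem_Y_of_mem_X N _ hr hrY hs, hN,
        mutEntry_of_mem_Y_of_mem_X M _ hr hrY (hσ s hs), σ.apply_inv_self]
    · rw [mutEntry_of_notMem_left N _ hr hrY, hN, mutEntry_of_notMem_left M _ hr hrY]
  · rw [mutEntry_of_notMem_of_notMem N _ hr hs, hN, mutEntry_of_notMem_of_notMem M _ hr hs]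

end MutEntry

theorem IsMutable.inv_apply_mem {S : Type*} {M : CoxeterMatrix S} {X Y T Z : Set S}
    {σ : Equiv.Perm S} (hmut : IsMutable M X Y T Z σ) {x : S} (hx : x ∈ X) : σ⁻¹ x ∈ X := by
  obtain ⟨-, -, -, -, -, -, -, -, hσfix, -⟩ := hmut
  exact Equiv.Perm.inv_apply_mem_of_eq_self_of_notMem hσfix hx

theorem IsMutable.mutation {S : Type*} {M : CoxeterMatrix S} {X Y T Z : Set S}
    {σ : Equiv.Perm S} (hmut : IsMutable M X Y T Z σ) {N : CoxeterMatrix S}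
    (hN : ∀ r s, N r s = mutEntry M X Y σ r s) : IsMutable N X Y T Z σ⁻¹ := by
  obtain ⟨hXY, hXT, hXZ, hYT, hYZ, hTZ, hcov, -, hσfix, hσM, hTY, hZY, hZX⟩ := id hmut
  have hσX (x : S) (hx : x ∈ X) : σ⁻¹ x ∈ X := hmut.inv_apply_mem hx
  have hN_of_notMem {r : S} (hrX : r ∉ X) (hrY : r ∉ Y) (s : S) : N r s = M r s := by
    rw [hN, mutEntry_of_notMem_left M σ hrX hrY]
  refine ⟨hXY, hXT, hXZ, hYT, hYZ, hTZ, hcov, hσX,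
    fun s hs => Equiv.Perm.inv_eq_iff_eq.mpr (hσfix s hs).symm, ?_, ?_, ?_, ?_⟩
  · intro x hx x' hx'
    rw [hN, hN, mutEntry_of_mem_of_mem M σ (hσX x hx) (hσX x' hx'),
      mutEntry_of_mem_of_mem M σ hx hx', σ.apply_inv_self, σ.apply_inv_self, hσM x hx x' hx']
  · intro t ht y hy
    rw [hN_of_notMem (hXT.notMem_of_mem_right ht) (hYT.notMem_of_mem_right ht), hTY t ht y hy]
  · intro z hz y hy
    rw [hN_of_notMem (hXZ.notMem_of_mem_right hz) (hYZ.notMem_of_mem_right hz)]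
    exact hZY z hz y hy
  · intro z hz x hx
    have hzX := hXZ.notMem_of_mem_right hz
    have hzY := hYZ.notMem_of_mem_right hz
    rw [hN_of_notMem hzX hzY, hN_of_notMem hzX hzY, ← hZX z hz _ (hσX x hx), σ.apply_inv_self]

/-- if `(M,X,Y,σ)` is a mutable tuple, then `(μ(M,X,Y,σ), X, Y, σ⁻¹)` is
also a mutable tuple and `μ(μ(M,X,Y,σ), X, Y, σ⁻¹) = M`: mutation is an involution on
mutable tuples. -/
theorem mutation_involutive {S : Type*} (M : CoxeterMatrix S) (X Y T Z : Set S)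
    (σ : Equiv.Perm S) (hmut : IsMutable M X Y T Z σ)
    (N : CoxeterMatrix S) (hN : ∀ r s, N r s = mutEntry M X Y σ r s) :
    IsMutable N X Y T Z σ⁻¹ ∧ ∀ r s, mutEntry N X Y σ⁻¹ r s = M r s :=
  ⟨hmut.mutation hN, mutEntry_mutEntry_inv M σ (fun _ => hmut.inv_apply_mem) hN⟩
end
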